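/- Fix s ∈ ℝ, Y ∈ ℝ^{n+1}, and let ρ(X,t) := (4π(s−t))^{−n/2} exp(−|X−Y|²/(4(s−t))) for X ∈ ℝ^{n+1} and t < s. Then for every unit vector w ∈ ℝ^{n+1}, every X ∈ ℝ^{n+1} and every t < s: (w·Dρ)²/ρ + (I − w⊗w) : D²ρ + ∂_t ρ = 0, where D and D² denote the gradient and Hessian in X, I is the (n+1)×(n+1) identity matrix, and A:B := tr(AB). -/

import Mathlib

/-! With `τ = s - t` and `a = 1/(2τ)` one computes
`Dρ = -a ρ (X - Y)`, `D²ρ = ρ (a² (X - Y) ⊗ (X - Y) - a I)` and `∂ₜρ = ρ (n a - a² |X - Y|²)`.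
Substituting, the `(w · (X - Y))²` terms of the first two summands cancel, the `|X - Y|²` terms
of the last two cancel, and the remaining constants add up to `a (|w|² - (n + 1) + n) = 0`. -/

open Set Real
open scoped RealInnerProductSpace

noncomputable section

abbrev Eucl (n : ℕ) := EuclideanSpace ℝ (Fin n)

/-- partial derivative in the `i`-th coordinate direction -/
def pd {m : ℕ} (g : Eucl m → ℝ) (i : Fin m) (x : Eucl m) : ℝ :=
  fderiv ℝ g x (EuclideanSpace.single i 1)

/-- second partial derivative -/
def pd2 {m : ℕ} (g : Eucl m → ℝ) (i j : Fin m) (x : Eucl m) : ℝ :=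
  pd (pd g j) i x

/-- the `n`-dimensional backward heat kernel on `ℝ^{n+1}`, centred at `(Y,s)` -/
def bkernel {n : ℕ} (Y : Eucl (n + 1)) (s : ℝ) (X : Eucl (n + 1)) (t : ℝ) : ℝ :=
  (4 * π * (s - t)) ^ (-(n : ℝ) / 2) * Real.exp (-‖X - Y‖ ^ 2 / (4 * (s - t)))

lemma bkernel_pos {n : ℕ} (Y : Eucl (n + 1)) {s t : ℝ} (hts : t < s) (X : Eucl (n + 1)) :
    0 < bkernel Y s X t :=
  mul_pos (rpow_pos_of_pos (by have := pi_pos; nlinarith) _) (exp_pos _)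

lemma hasGradientAt_bkernel {n : ℕ} (Y : Eucl (n + 1)) (s t : ℝ) (X : Eucl (n + 1)) :
    HasGradientAt (fun Z => bkernel Y s Z t)
      ((-(2 * (s - t))⁻¹ * bkernel Y s X t) • (X - Y)) X := by
  have hρ : (fun Z => bkernel Y s Z t) = fun Z : Eucl (n + 1) =>
      (4 * π * (s - t)) ^ (-(n : ℝ) / 2) * exp (-(4 * (s - t))⁻¹ * ‖Z - Y‖ ^ 2) := by
    funext Z
    rw [bkernel]
    congr 2
    ring
  have hX : bkernel Y s X t = _ := congrFun hρ X
  rw [hasGradientAt_iff_hasFDerivAt, hX, hρ]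
  refine ((((hasFDerivAt_id X).sub_const Y).norm_sq.const_mul _).exp.const_mul _).congr_fderiv ?_
  ext v
  simp only [mul_inv_rev, id_eq, neg_mul, map_sub, ContinuousLinearMap.comp_id, neg_smul, smul_neg,
    neg_apply, smul_apply, sub_apply, coe_innerSL_apply, nsmul_eq_mul, Nat.cast_ofNat, smul_eq_mul,
    map_neg, map_smul, InnerProductSpace.toDual_apply_apply, neg_inj]
  ring

lemma HasGradientAt.pd_eq {m : ℕ} {g : Eucl m → ℝ} {g' x : Eucl m} (h : HasGradientAt g g' x)
    (i : Fin m) : pd g i x = g' i := by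
  rw [pd, h.hasFDerivAt.fderiv]
  simp [EuclideanSpace.inner_single_right]

lemma pd_bkernel {n : ℕ} (Y : Eucl (n + 1)) (s t : ℝ) (i : Fin (n + 1)) :
    pd (fun Z => bkernel Y s Z t) i
      = fun Z => -(2 * (s - t))⁻¹ * bkernel Y s Z t * (Z i - Y i) := by
  funext Z
  simp [(hasGradientAt_bkernel Y s t Z).pd_eq, mul_assoc]

lemma pd2_bkernel {n : ℕ} (Y : Eucl (n + 1)) (s t : ℝ) (i j : Fin (n + 1)) (X : Eucl (n + 1)) :
    pd2 (fun Z => bkernel Y s Z t) i j X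
      = bkernel Y s X t * (2 * (s - t))⁻¹ ^ 2 * ((X - Y) i * (X - Y) j)
        - bkernel Y s X t * (2 * (s - t))⁻¹ * if i = j then 1 else 0 := by
  have hcoord : HasFDerivAt (fun Z : Eucl (n + 1) => Z j - Y j)
      (EuclideanSpace.proj j : Eucl (n + 1) →L[ℝ] ℝ) X :=
    (EuclideanSpace.proj j : Eucl (n + 1) →L[ℝ] ℝ).hasFDerivAt.sub_const (Y j)
  have hderiv : HasFDerivAt (fun Z => -(2 * (s - t))⁻¹ * bkernel Y s Z t * (Z j - Y j)) _ X :=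
    ((hasGradientAt_bkernel Y s t X).hasFDerivAt.const_mul _).mul hcoord
  rw [pd2, pd, pd_bkernel, hderiv.fderiv]
  simp only [mul_inv_rev, neg_mul, neg_smul, map_neg, map_smul, map_sub, smul_neg, neg_neg,
    add_apply, neg_apply, smul_apply, PiLp.proj_apply, PiLp.single_apply, eq_comm, smul_eq_mul,
    mul_ite, mul_one, mul_zero, sub_apply, InnerProductSpace.toDual_apply_apply,
    EuclideanSpace.inner_single_right, ringHom_apply, one_mul, PiLp.sub_apply]
  split_ifs <;> ring

lemma hasDerivAt_bkernel_time {n : ℕ} (Y : Eucl (n + 1)) {s t : ℝ} (hts : t < s)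
    (X : Eucl (n + 1)) :
    HasDerivAt (fun r => bkernel Y s X r)
      (bkernel Y s X t * (n * (2 * (s - t))⁻¹ - (2 * (s - t))⁻¹ ^ 2 * ‖X - Y‖ ^ 2)) t := by
  have hτ : 0 < s - t := sub_pos.mpr hts
  have hscale : 0 < 4 * π * (s - t) := by positivity
  have hpow := (((hasDerivAt_id t).const_sub s).const_mul (4 * π)).rpow_const
    (p := -(n : ℝ) / 2) (Or.inl hscale.ne')
  have hexp := ((hasDerivAt_const t (-‖X - Y‖ ^ 2)).div
    (((hasDerivAt_id t).const_sub s).const_mul 4) (by positivity)).exp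
  refine (hpow.mul hexp).congr_deriv ?_
  simp only [bkernel, id, Pi.div_apply]
  rw [rpow_sub hscale, rpow_one]
  field_simp
  ring

lemma sum_sum_id_sub_outer_mul_outer_sub_id {ι : Type*} [Fintype ι] [DecidableEq ι]
    (w d : EuclideanSpace ℝ ι) (α β : ℝ) :
    ∑ i, ∑ j, ((if i = j then (1 : ℝ) else 0) - w i * w j)
        * (α * (d j * d i) - β * if j = i then 1 else 0)
      = α * (‖d‖ ^ 2 - ⟪w, d⟫ ^ 2) - β * (Fintype.card ι - ‖w‖ ^ 2) := by
  have hwd : ⟪w, d⟫ ^ 2 = ∑ i, ∑ j, w i * w j * (d j * d i) := by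
    simp only [sq, PiLp.inner_apply, RCLike.inner_apply, conj_trivial, Finset.sum_mul_sum]
    exact Finset.sum_congr rfl fun i _ => Finset.sum_congr rfl fun j _ => by ring
  simp only [sub_mul, mul_sub, Finset.sum_sub_distrib, ite_mul, one_mul, zero_mul, mul_ite,
    mul_one, mul_zero, Finset.sum_ite_eq, Finset.sum_ite_eq', Finset.mem_univ, if_true,
    Finset.sum_const, Finset.card_univ, nsmul_eq_mul, EuclideanSpace.real_norm_sq_eq, hwd,
    Finset.mul_sum]
  ring_nf

/-- Huisken's kernel identity:
`(w·Dρ)²/ρ + (I − w⊗w) : D²ρ + ∂_t ρ = 0`. -/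
theorem huisken_kernel_identity (n : ℕ) (s : ℝ) (Y : Eucl (n + 1))
    (w : Eucl (n + 1)) (hw : ‖w‖ = 1) (X : Eucl (n + 1)) (t : ℝ) (hts : t < s) :
    ⟪w, gradient (fun Z => bkernel Y s Z t) X⟫ ^ 2 / bkernel Y s X t
      + (∑ i, ∑ j, ((if i = j then (1 : ℝ) else 0) - w i * w j)
          * pd2 (fun Z => bkernel Y s Z t) j i X)
      + deriv (fun r => bkernel Y s X r) t = 0 := by
  have hρ := (bkernel_pos Y hts X).ne'
  simp only [pd2_bkernel]
  rw [(hasGradientAt_bkernel Y s t X).gradient, inner_smul_right,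
    sum_sum_id_sub_outer_mul_outer_sub_id, (hasDerivAt_bkernel_time Y hts X).deriv, hw,
    Fintype.card_fin, Nat.cast_add, Nat.cast_one]
  field_simp
  ring

end
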